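/- Let D be an N×N real diagonal matrix. Then the maximum over all unitary matrices V of order N of the minimum over all N×N permutation matrices P of the squared Hilbert–Schmidt norm ‖D − P V D V† Pᵀ‖²_HS equals 2·(Tr D² − (Tr D)²/N); moreover this maximum is attained when V is any complex Hadamard matrix of order N (in which case the value is independent of the permutation P). -/

import Mathlib

open Matrix

/-- The real diagonal matrix with diagonal `d`, viewed as a complex matrix. -/
noncomputable def diagMat {N : ℕ} (d : Fin N → ℝ) : Matrix (Fin N) (Fin N) ℂ :=
  Matrix.diagonal fun i => (d i : ℂ)

/-- Squared Hilbert–Schmidt norm of a complex matrix. -/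
noncomputable def hsNormSq {N : ℕ} (X : Matrix (Fin N) (Fin N) ℂ) : ℝ :=
  ∑ i, ∑ j, ‖X i j‖ ^ 2

/-!
For unitary `W`, expanding `‖D - W D Wᴴ‖²_HS = Tr D² + Tr (W D Wᴴ)² - 2 Tr (D W D Wᴴ)` gives
`2 Tr D² - 2 ∑ᵢ dᵢ mᵢ`, where `mᵢ = ∑ₖ dₖ |W_{ik}|²`. Replacing `V` by `P V` permutes the `mᵢ`,
and since the columns of `V` are unit vectors, `∑ᵢ mᵢ = Tr D`. Averaging `∑ᵢ dᵢ m_{i+g}` over the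
cyclic shifts `g` of `Fin N` gives `(Tr D)² / N`, so some shift does at least that well. For a
complex Hadamard matrix every `mᵢ` equals `Tr D / N`, whatever the permutation.
-/

open scoped BigOperators in
lemma exists_le_sum_mul_add {G : Type*} [AddGroup G] [Fintype G] (a b : G → ℝ) :
    ∃ g, (∑ i, a i) * (∑ i, b i) / Fintype.card G ≤ ∑ i, a i * b (i + g) := by
  have hmean : 𝔼 g, ∑ i, a i * b (i + g) = (∑ i, a i) * (∑ i, b i) / Fintype.card G := by
    rw [Fintype.expect_eq_sum_div_card, Finset.sum_comm, Finset.sum_mul]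
    congr 1
    refine Finset.sum_congr rfl fun i _ => ?_
    rw [← Finset.mul_sum]
    exact congrArg _ (Equiv.sum_comp (Equiv.addLeft i) b)
  obtain ⟨g, -, hg⟩ := Finset.exists_le_of_le_expect Finset.univ_nonempty hmean.ge
  exact ⟨g, hg⟩

section Unitary

variable {n R : Type*} [Fintype n] [DecidableEq n]

lemma trace_diagonal_mul [NonUnitalNonAssocSemiring R] (c : n → R) (A : Matrix n n R) :
    trace (diagonal c * A) = ∑ i, c i * A i i := by
  simp [trace, diagonal_mul]

lemma trace_unitary_conj_mul_self [CommRing R] [StarRing R] {W : Matrix n n R}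
    (hW : W ∈ unitaryGroup n R) (X : Matrix n n R) :
    trace (W * X * Wᴴ * (W * X * Wᴴ)) = trace (X * X) := by
  have hWW : Wᴴ * W = 1 := by simpa [star_eq_conjTranspose] using Unitary.star_mul_self_of_mem hW
  calc trace (W * X * Wᴴ * (W * X * Wᴴ)) = trace (W * (X * (Wᴴ * W) * X) * Wᴴ) := by
        simp only [Matrix.mul_assoc]
    _ = trace (X * X) := by rw [trace_mul_cycle, ← Matrix.mul_assoc, hWW, Matrix.one_mul,
        Matrix.mul_one]

lemma permMatrix_mem_unitaryGroup [CommRing R] [StarRing R] (σ : Equiv.Perm n) :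
    σ.permMatrix R ∈ unitaryGroup n R := by
  rw [mem_unitaryGroup_iff, star_eq_conjTranspose, conjTranspose_permMatrix, ← permMatrix_mul,
    inv_mul_cancel, permMatrix_one]

lemma permMatrix_mul_apply [NonAssocSemiring R] (σ : Equiv.Perm n) (V : Matrix n n R) (i k : n) :
    (σ.permMatrix R * V) i k = V (σ i) k := by
  rw [PEquiv.toMatrix_toPEquiv_mul]
  rfl

lemma sum_norm_sq_apply_eq_one {V : Matrix n n ℂ} (hV : V ∈ unitaryGroup n ℂ) (k : n) :
    ∑ i, ‖V i k‖ ^ 2 = 1 := by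
  have hVV : Vᴴ * V = 1 := by simpa [star_eq_conjTranspose] using Unitary.star_mul_self_of_mem hV
  have h : (Vᴴ * V) k k = 1 := by rw [hVV, one_apply_eq]
  simp only [mul_apply, conjTranspose_apply, RCLike.star_def, Complex.conj_mul'] at h
  exact_mod_cast h

lemma mul_diagonal_mul_conjTranspose_apply_self (W : Matrix n n ℂ) (d : n → ℝ) (i : n) :
    (W * diagonal (fun k => (d k : ℂ)) * Wᴴ) i i = ((∑ k, d k * ‖W i k‖ ^ 2 : ℝ) : ℂ) := by
  rw [mul_apply]
  simp only [mul_diagonal, conjTranspose_apply, RCLike.star_def]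
  push_cast
  refine Finset.sum_congr rfl fun k _ => ?_
  rw [mul_right_comm, Complex.mul_conj', mul_comm]

end Unitary

section HilbertSchmidt

variable {N : ℕ}

lemma hsNormSq_eq_re_trace (X : Matrix (Fin N) (Fin N) ℂ) :
    hsNormSq X = (trace (Xᴴ * X)).re := by
  simp only [hsNormSq, trace, diag_apply, mul_apply, conjTranspose_apply, Complex.re_sum,
    RCLike.star_def, Complex.conj_mul']
  rw [Finset.sum_comm]
  norm_cast

lemma hsNormSq_sub_of_isHermitian {A B : Matrix (Fin N) (Fin N) ℂ} (hA : A.IsHermitian)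
    (hB : B.IsHermitian) :
    hsNormSq (A - B) = (trace (A * A)).re + (trace (B * B)).re - 2 * (trace (A * B)).re := by
  have hexpand : (A - B)ᴴ * (A - B) = A * A - A * B - B * A + B * B := by
    rw [conjTranspose_sub, hA.eq, hB.eq]
    noncomm_ring
  rw [hsNormSq_eq_re_trace, hexpand, trace_add, trace_sub, trace_sub, trace_mul_comm B A]
  simp only [Complex.add_re, Complex.sub_re]
  ring

lemma hsNormSq_diagMat_sub_unitary_conj (d : Fin N → ℝ) {W : Matrix (Fin N) (Fin N) ℂ}
    (hW : W ∈ unitaryGroup (Fin N) ℂ) :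
    hsNormSq (diagMat d - W * diagMat d * Wᴴ) =
      2 * ∑ i, d i ^ 2 - 2 * ∑ i, d i * ∑ k, d k * ‖W i k‖ ^ 2 := by
  have hD : (diagMat d).IsHermitian := isHermitian_diagonal_of_self_adjoint _ <| by
    ext i; simp
  have hDD : (trace (diagMat d * diagMat d)).re = ∑ i, d i ^ 2 := by
    simp [diagMat, sq]
  have hDA : (trace (diagMat d * (W * diagMat d * Wᴴ))).re =
      ∑ i, d i * ∑ k, d k * ‖W i k‖ ^ 2 := by
    simp only [diagMat, trace_diagonal_mul, mul_diagonal_mul_conjTranspose_apply_self,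
      ← Complex.ofReal_mul, ← Complex.ofReal_sum, Complex.ofReal_re]
  rw [hsNormSq_sub_of_isHermitian hD (isHermitian_mul_mul_conjTranspose W hD),
    trace_unitary_conj_mul_self hW, hDD, hDA]
  ring

lemma hsNormSq_diagMat_sub_perm_unitary_conj (d : Fin N → ℝ) {V : Matrix (Fin N) (Fin N) ℂ}
    (hV : V ∈ unitaryGroup (Fin N) ℂ) (σ : Equiv.Perm (Fin N)) :
    hsNormSq (diagMat d - σ.permMatrix ℂ * V * diagMat d * Vᴴ * (σ.permMatrix ℂ)ᵀ) =
      2 * ∑ i, d i ^ 2 - 2 * ∑ i, d i * ∑ k, d k * ‖V (σ i) k‖ ^ 2 := by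
  have hconj : σ.permMatrix ℂ * V * diagMat d * Vᴴ * (σ.permMatrix ℂ)ᵀ =
      (σ.permMatrix ℂ * V) * diagMat d * (σ.permMatrix ℂ * V)ᴴ := by
    rw [conjTranspose_mul, conjTranspose_permMatrix, transpose_permMatrix]
    simp only [Matrix.mul_assoc]
  rw [hconj, hsNormSq_diagMat_sub_unitary_conj d (mul_mem (permMatrix_mem_unitaryGroup σ) hV)]
  simp only [permMatrix_mul_apply]

end HilbertSchmidt

theorem max_min_distance_to_orbit (N : ℕ) (hN : 0 < N) (d : Fin N → ℝ)
    (F : Matrix (Fin N) (Fin N) ℂ)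
    (hF : F ∈ Matrix.unitaryGroup (Fin N) ℂ)
    (hFmod : ∀ j k, ‖F j k‖ = 1 / Real.sqrt N) :
    (∀ V ∈ Matrix.unitaryGroup (Fin N) ℂ, ∃ σ : Equiv.Perm (Fin N),
        hsNormSq (diagMat d -
            (σ.permMatrix ℂ) * V * diagMat d * Vᴴ * (σ.permMatrix ℂ)ᵀ) ≤
          2 * (∑ i, d i ^ 2 - (∑ i, d i) ^ 2 / N)) ∧
    (∀ σ : Equiv.Perm (Fin N),
        hsNormSq (diagMat d -
            (σ.permMatrix ℂ) * F * diagMat d * Fᴴ * (σ.permMatrix ℂ)ᵀ) =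
          2 * (∑ i, d i ^ 2 - (∑ i, d i) ^ 2 / N)) := by
  refine ⟨fun V hV => ?_, fun σ => ?_⟩
  · have : NeZero N := ⟨hN.ne'⟩
    set m : Fin N → ℝ := fun i => ∑ k, d k * ‖V i k‖ ^ 2
    have hm : ∑ i, m i = ∑ i, d i := by
      simp only [m, Finset.sum_comm (γ := Fin N), ← Finset.mul_sum,
        sum_norm_sq_apply_eq_one hV, mul_one]
    obtain ⟨g, hg⟩ := exists_le_sum_mul_add d m
    rw [hm, Fintype.card_fin, ← sq] at hg
    refine ⟨Equiv.addRight g, ?_⟩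
    rw [hsNormSq_diagMat_sub_perm_unitary_conj d hV]
    change _ - 2 * ∑ i, d i * m (i + g) ≤ _
    linarith
  · have hFsq : ∀ j k, ‖F j k‖ ^ 2 = 1 / N := fun j k => by
      rw [hFmod, div_pow, one_pow, Real.sq_sqrt (Nat.cast_nonneg N)]
    rw [hsNormSq_diagMat_sub_perm_unitary_conj d hF]
    simp only [hFsq, ← Finset.sum_mul]
    ring
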